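/- arXiv:2209.15551 — 3 statements merged into one kernel-verified Lean document; each statement's English description precedes it below -/
import Mathlib

section
/- Let μ ∈ (0, 1/2), and set γ = 2μ/(1+μ), M = 2/(1/2 − μ), δ = γ/M, and I(s) = ∫_s^∞ t^{δ−1}/(1+t^{2δ}) dt for s ≥ 0 (a finite, decreasing function). For A > 0 define h_A(s) = A·s^{−γ} + exp(A²·I(s)) for s > 0, so that h_A is positive and decreasing with −h_A'(s) = A·γ·s^{−γ−1} + A²·(s^{δ−1}/(1+s^{2δ}))·exp(A²·I(s)). Then for every K > 0 there exists A₀ > 0 such that for all A ≥ A₀, all s > 0, and all t ≥ 1: s·(−h_A'(s))/h_A(s)·t + h_A(s)²·s^{γ}·t^{−M} ≥ K. -/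
/-!
Write `h = A s^(-γ) + E` with `E = exp(A² I(s)) ≥ 1` and `q = s^δ / (1 + s^(2δ))`. Then
`s (-h') / h` is a weighted mean of `γ` and `A² q`, hence at least `α = min γ (A² q)`, and weighted
AM–GM gives `α t + b t^(-M) ≥ α^θ b^(1-θ)` with `θ = M / (M + 1)` and `b = h² s^γ`, for every
`t > 0`. If `α = γ`, use `b ≥ A`. If `α = A² q`, put `m = max (s^δ) (s^(-δ))`: then
`A² q ≥ A² / (2m)` and, since `γ = δ M`, `b ≥ m^M`; the powers of `m` cancel and leave `(A²/2)^θ`.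
Both lower bounds tend to infinity with `A`.
-/

open Filter Real MeasureTheory

theorem rpow_mul_rpow_le_mul_add_mul_rpow_neg {a b t M : ℝ} (ha : 0 ≤ a) (hb : 0 ≤ b)
    (ht : 0 < t) (hM : 0 < M) :
    a ^ (M / (M + 1)) * b ^ (1 / (M + 1)) ≤ a * t + b * t ^ (-M) := by
  have hM1 : 0 < M + 1 := by linarith
  have hw : M / (M + 1) + 1 / (M + 1) = 1 := by field_simp
  have htM : 0 ≤ t ^ (-M) := rpow_nonneg ht.le _
  have hbal : t ^ (M / (M + 1)) * (t ^ (-M)) ^ (1 / (M + 1)) = 1 := by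
    rw [← rpow_mul ht.le, ← rpow_add ht, show M / (M + 1) + -M * (1 / (M + 1)) = 0 by ring,
      rpow_zero]
  calc a ^ (M / (M + 1)) * b ^ (1 / (M + 1))
      = (a * t) ^ (M / (M + 1)) * (b * t ^ (-M)) ^ (1 / (M + 1)) := by
        rw [mul_rpow ha ht.le, mul_rpow hb htM, mul_mul_mul_comm, hbal, mul_one]
    _ ≤ M / (M + 1) * (a * t) + 1 / (M + 1) * (b * t ^ (-M)) :=
        geom_mean_le_arith_mean2_weighted (by positivity) (by positivity) (by positivity)
          (by positivity) hw
    _ ≤ a * t + b * t ^ (-M) := by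
        have h1 : M / (M + 1) ≤ 1 := (div_le_one hM1).2 (by linarith)
        have h2 : 1 / (M + 1) ≤ 1 := (div_le_one hM1).2 (by linarith)
        exact add_le_add (mul_le_of_le_one_left (by positivity) h1)
          (mul_le_of_le_one_left (by positivity) h2)

theorem div_rpow_mul_rpow_rpow_eq {a m M : ℝ} (ha : 0 ≤ a) (hm : 0 < m) :
    (a / m) ^ (M / (M + 1)) * (m ^ M) ^ (1 / (M + 1)) = a ^ (M / (M + 1)) := by
  rw [← rpow_mul hm.le, mul_one_div, div_rpow ha hm.le,
    div_mul_cancel₀ _ (rpow_pos_of_pos hm _).ne']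

theorem min_le_mul_add_mul_div_add {c d x y : ℝ} (hx : 0 ≤ x) (hy : 0 ≤ y) (hxy : 0 < x + y) :
    min c d ≤ (c * x + d * y) / (x + y) := by
  rw [le_div_iff₀ hxy]
  nlinarith [mul_le_mul_of_nonneg_right (min_le_left c d) hx,
    mul_le_mul_of_nonneg_right (min_le_right c d) hy]

theorem inv_two_mul_max_inv_le_div_one_add_sq {u : ℝ} (hu : 0 < u) :
    (2 * max u u⁻¹)⁻¹ ≤ u / (1 + u ^ 2) := by
  rw [inv_le_comm₀ (by positivity) (by positivity), inv_div, div_le_iff₀ hu]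
  rcases le_total u 1 with h | h
  · have : 1 ≤ u⁻¹ := one_le_inv₀ hu |>.2 h
    have : u⁻¹ * u = 1 := inv_mul_cancel₀ hu.ne'
    nlinarith [le_max_right u u⁻¹]
  · nlinarith [le_max_left u u⁻¹]

section Stacking

variable {γ δ M A E s t : ℝ}

theorem stacking_ratio_ge (hs : 0 < s) (hA : 0 ≤ A) (hE : 0 < E) :
    min γ (A ^ 2 * (s ^ δ / (1 + s ^ (2 * δ)))) ≤
      s * (A * γ * s ^ (-γ - 1) + A ^ 2 * (s ^ (δ - 1) / (1 + s ^ (2 * δ))) * E) /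
        (A * s ^ (-γ) + E) := by
  have hnum : s * (A * γ * s ^ (-γ - 1) + A ^ 2 * (s ^ (δ - 1) / (1 + s ^ (2 * δ))) * E)
      = γ * (A * s ^ (-γ)) + A ^ 2 * (s ^ δ / (1 + s ^ (2 * δ))) * E := by
    rw [rpow_sub_one hs.ne', rpow_sub_one hs.ne']
    field_simp
  rw [hnum]
  exact min_le_mul_add_mul_div_add (by positivity) hE.le (by positivity)

theorem le_sq_mul_rpow (hs : 0 < s) (hA : 0 ≤ A) (hE : 1 ≤ E) :
    A ≤ (A * s ^ (-γ) + E) ^ 2 * s ^ γ := by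
  have hX : 0 ≤ A * s ^ (-γ) := by positivity
  have hsq : A * s ^ (-γ) ≤ (A * s ^ (-γ) + E) ^ 2 := by nlinarith
  calc A = A * s ^ (-γ) * s ^ γ := by
          rw [mul_assoc, ← rpow_add hs, neg_add_cancel, rpow_zero, mul_one]
    _ ≤ (A * s ^ (-γ) + E) ^ 2 * s ^ γ := by gcongr

theorem max_rpow_le_sq_mul_rpow (hs : 0 < s) (hγ : γ = δ * M) (hA : 1 ≤ A) (hE : 1 ≤ E) :
    max (s ^ δ) (s ^ δ)⁻¹ ^ M ≤ (A * s ^ (-γ) + E) ^ 2 * s ^ γ := by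
  have hX : 0 ≤ A * s ^ (-γ) := by positivity
  rcases max_choice (s ^ δ) (s ^ δ)⁻¹ with h | h <;> rw [h]
  · rw [← rpow_mul hs.le, ← hγ]
    exact le_mul_of_one_le_left (by positivity) (by nlinarith)
  · have hsq : A ^ 2 * s ^ (-γ) * s ^ (-γ) ≤ (A * s ^ (-γ) + E) ^ 2 := by nlinarith
    calc (s ^ δ)⁻¹ ^ M = s ^ (-γ) := by rw [← rpow_neg hs.le, ← rpow_mul hs.le, hγ, neg_mul]
      _ ≤ A ^ 2 * s ^ (-γ) := le_mul_of_one_le_left (by positivity) (by nlinarith)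
      _ = A ^ 2 * s ^ (-γ) * s ^ (-γ) * s ^ γ := by
          rw [mul_assoc _ (s ^ (-γ)), ← rpow_add hs, neg_add_cancel, rpow_zero, mul_one]
      _ ≤ (A * s ^ (-γ) + E) ^ 2 * s ^ γ := by gcongr

theorem min_le_stacking (hγ : 0 < γ) (hM : 0 < M) (hγδ : γ = δ * M) (hA : 1 ≤ A)
    (hE : 1 ≤ E) (hs : 0 < s) (ht : 0 < t) :
    min (γ ^ (M / (M + 1)) * A ^ (1 / (M + 1))) ((A ^ 2 / 2) ^ (M / (M + 1))) ≤
      s * (A * γ * s ^ (-γ - 1) + A ^ 2 * (s ^ (δ - 1) / (1 + s ^ (2 * δ))) * E) /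
          (A * s ^ (-γ) + E) * t +
        (A * s ^ (-γ) + E) ^ 2 * s ^ γ * t ^ (-M) := by
  set q := s ^ δ / (1 + s ^ (2 * δ))
  set b := (A * s ^ (-γ) + E) ^ 2 * s ^ γ
  have hb : 0 ≤ b := by positivity
  calc _ ≤ min γ (A ^ 2 * q) * t + b * t ^ (-M) := ?_
    _ ≤ _ := by gcongr; exact stacking_ratio_ge hs (by linarith) (by linarith)
  rcases le_total γ (A ^ 2 * q) with hcase | hcase
  · rw [min_eq_left hcase]
    calc _ ≤ γ ^ (M / (M + 1)) * A ^ (1 / (M + 1)) := min_le_left _ _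
      _ ≤ γ * t + A * t ^ (-M) := rpow_mul_rpow_le_mul_add_mul_rpow_neg hγ.le (by linarith) ht hM
      _ ≤ γ * t + b * t ^ (-M) := by gcongr; exact le_sq_mul_rpow hs (by linarith) hE
  · rw [min_eq_right hcase]
    set m := max (s ^ δ) (s ^ δ)⁻¹
    have hm : 0 < m := lt_max_of_lt_left (by positivity)
    have hqm : A ^ 2 / 2 / m ≤ A ^ 2 * q := by
      have := inv_two_mul_max_inv_le_div_one_add_sq (rpow_pos_of_pos hs δ)
      rw [← rpow_mul_natCast hs.le, mul_comm δ, Nat.cast_ofNat] at this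
      calc A ^ 2 / 2 / m = A ^ 2 * (2 * m)⁻¹ := by ring
        _ ≤ A ^ 2 * q := by gcongr
    calc _ ≤ (A ^ 2 / 2) ^ (M / (M + 1)) := min_le_right _ _
      _ = (A ^ 2 / 2 / m) ^ (M / (M + 1)) * (m ^ M) ^ (1 / (M + 1)) :=
          (div_rpow_mul_rpow_rpow_eq (by positivity) hm).symm
      _ ≤ (A ^ 2 * q) ^ (M / (M + 1)) * b ^ (1 / (M + 1)) := by
          gcongr
          exact max_rpow_le_sq_mul_rpow hs hγδ hA hE
      _ ≤ A ^ 2 * q * t + b * t ^ (-M) :=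
          rpow_mul_rpow_le_mul_add_mul_rpow_neg (by positivity) hb ht hM

end Stacking

theorem eventually_le_stacking {γ δ M : ℝ} (hγ : 0 < γ) (hM : 0 < M) (hγδ : γ = δ * M)
    (K : ℝ) :
    ∀ᶠ A in atTop, ∀ E ≥ (1 : ℝ), ∀ s > (0 : ℝ), ∀ t > (0 : ℝ), K ≤
      s * (A * γ * s ^ (-γ - 1) + A ^ 2 * (s ^ (δ - 1) / (1 + s ^ (2 * δ))) * E) /
          (A * s ^ (-γ) + E) * t +
        (A * s ^ (-γ) + E) ^ 2 * s ^ γ * t ^ (-M) := by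
  have hsq : Tendsto (fun A : ℝ => A ^ 2 / 2) atTop atTop :=
    (tendsto_pow_atTop two_ne_zero).atTop_div_const two_pos
  have h₁ : Tendsto (fun A : ℝ => γ ^ (M / (M + 1)) * A ^ (1 / (M + 1))) atTop atTop :=
    (tendsto_rpow_atTop (by positivity)).const_mul_atTop (by positivity)
  have h₂ : Tendsto (fun A : ℝ => (A ^ 2 / 2) ^ (M / (M + 1))) atTop atTop :=
    (tendsto_rpow_atTop (by positivity)).comp hsq
  filter_upwards [h₁.eventually_ge_atTop K, h₂.eventually_ge_atTop K, eventually_ge_atTop 1]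
    with A hK₁ hK₂ hA E hE s hs t ht
  exact (le_min hK₁ hK₂).trans (min_le_stacking hγ hM hγδ hA hE hs ht)

/-- The supersolution re-stacking inequality: with `γ = 2μ/(1+μ)`, `M = 2/(1/2-μ)`,
`δ = γ/M`, `I(s) = ∫_s^∞ t^(δ-1)/(1+t^(2δ)) dt`, and
`h_A(s) = A s^(-γ) + exp(A² I(s))` (whose negative derivative is
`Aγ s^(-γ-1) + A² (s^(δ-1)/(1+s^(2δ))) exp(A² I(s))`), for every `K > 0` there is
`A₀ > 0` such that for all `A ≥ A₀`, `s > 0`, `t ≥ 1`: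
`s·(-h_A')/h_A·t + h_A²·s^γ·t^(-M) ≥ K`. -/
theorem supersolution_stacking_inequality (μ : ℝ) (hμ : 0 < μ) (hμ' : μ < 1 / 2) :
    let γ : ℝ := 2 * μ / (1 + μ)
    let M : ℝ := 2 / (1 / 2 - μ)
    let δ : ℝ := γ / M
    let I : ℝ → ℝ := fun s => ∫ t in Set.Ioi s, t ^ (δ - 1) / (1 + t ^ (2 * δ))
    ∀ K > (0 : ℝ), ∃ A₀ > (0 : ℝ), ∀ A ≥ A₀, ∀ s > (0 : ℝ), ∀ t ≥ (1 : ℝ),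
      s * (A * γ * s ^ (-γ - 1) +
            A ^ 2 * (s ^ (δ - 1) / (1 + s ^ (2 * δ))) * Real.exp (A ^ 2 * I s)) /
          (A * s ^ (-γ) + Real.exp (A ^ 2 * I s)) * t +
        (A * s ^ (-γ) + Real.exp (A ^ 2 * I s)) ^ 2 * s ^ γ * t ^ (-M) ≥ K := by
  intro γ M δ I K _
  have hγ : 0 < γ := div_pos (by linarith) (by linarith)
  have hM : 0 < M := div_pos (by norm_num) (by linarith)
  have hI : ∀ s > 0, 0 ≤ I s := fun s hs =>
    setIntegral_nonneg measurableSet_Ioi fun x hx => by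
      have : 0 < x := hs.trans hx
      positivity
  obtain ⟨A₀, hA₀⟩ :=
    eventually_atTop.1 (eventually_le_stacking hγ hM (div_mul_cancel₀ γ hM.ne').symm K)
  refine ⟨max A₀ 1, by positivity, fun A hA s hs t ht => ?_⟩
  exact hA₀ A (le_of_max_le_left hA) _ (one_le_exp (by have := hI s hs; positivity)) s hs t
    (by linarith)
end

section
/- Let μ ∈ (0, 1/2), and set γ = 2μ/(1+μ), M = 2/(1/2 − μ), δ = γ/M, and I(s) = ∫_s^∞ t^{δ−1}/(1+t^{2δ}) dt for s ≥ 0. For C > 0 define h_C(s) = exp(−C·I(s)) for s > 0, so that h_C is increasing with h_C'(s) = C·(s^{δ−1}/(1+s^{2δ}))·h_C(s) > 0. Then for every K > 0 there exists C₀ > 0 such that for all C ≥ C₀, all s ≥ 1 with h_C(s) ≥ 1/2, and all t ≥ 1: s·h_C'(s)·t + s^{γ}·t^{−M} ≥ K. -/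
open scoped Topology
open MeasureTheory

/-- The subsolution re-stacking inequality: with `γ = 2μ/(1+μ)`, `M = 2/(1/2-μ)`,
`δ = γ/M`, `I(s) = ∫_s^∞ t^(δ-1)/(1+t^(2δ)) dt`, and `h_C(s) = exp(-C·I(s))` (whose
derivative is `C·(s^(δ-1)/(1+s^(2δ)))·h_C(s)`), for every `K > 0` there is `C₀ > 0`
such that for all `C ≥ C₀`, all `s ≥ 1` with `h_C(s) ≥ 1/2`, and all `t ≥ 1`:
`s·h_C'(s)·t + s^γ·t^(-M) ≥ K`. -/
theorem subsolution_stacking_inequality (μ : ℝ) (hμ : 0 < μ) (hμ' : μ < 1 / 2) :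
    let γ : ℝ := 2 * μ / (1 + μ)
    let M : ℝ := 2 / (1 / 2 - μ)
    let δ : ℝ := γ / M
    let I : ℝ → ℝ := fun s => ∫ t in Set.Ioi s, t ^ (δ - 1) / (1 + t ^ (2 * δ))
    ∀ K > (0 : ℝ), ∃ C₀ > (0 : ℝ), ∀ C ≥ C₀, ∀ s ≥ (1 : ℝ),
      Real.exp (-C * I s) ≥ 1 / 2 → ∀ t ≥ (1 : ℝ),
        s * (C * (s ^ (δ - 1) / (1 + s ^ (2 * δ))) * Real.exp (-C * I s)) * t +
          s ^ γ * t ^ (-M) ≥ K := by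
  intro γ M δ I K hK
  have hγ : 0 < γ := by
    have : 0 < 1 + μ := by linarith
    positivity
  have hM : 0 < M := by
    have : 0 < 1 / 2 - μ := by linarith
    positivity
  have hδ : 0 < δ := div_pos hγ hM
  set κ : ℝ := K ^ (1 / M) with hκdef
  have hκ : 0 < κ := Real.rpow_pos_of_pos hK _
  refine ⟨4 * K * κ, by positivity, ?_⟩
  intro C hC s hs hh t ht
  have hs0 : (0 : ℝ) < s := lt_of_lt_of_le one_pos hs
  have ht0 : (0 : ℝ) < t := lt_of_lt_of_le one_pos ht
  have hC0 : (0 : ℝ) < C := lt_of_lt_of_le (by positivity) hC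
  have hterm2 : 0 ≤ s ^ γ * t ^ (-M) := by positivity
  set h : ℝ := Real.exp (-C * I s) with hhdef
  have hhpos : 0 < h := Real.exp_pos _
  set a : ℝ := s ^ δ with hadef
  have ha1 : (1 : ℝ) ≤ a := Real.one_le_rpow hs (le_of_lt hδ)
  have ha0 : (0 : ℝ) < a := lt_of_lt_of_le one_pos ha1
  have hsd : s ^ (δ - 1) = a / s := by
    rw [hadef, Real.rpow_sub hs0, Real.rpow_one]
  have hs2d : s ^ (2 * δ) = a ^ 2 := by
    rw [hadef, ← Real.rpow_natCast (s ^ δ) 2, ← Real.rpow_mul (le_of_lt hs0)]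
    norm_num
    ring_nf
  by_cases hcase : K ≤ s ^ γ * t ^ (-M)
  · have hnn : 0 ≤ s * (C * (s ^ (δ - 1) / (1 + s ^ (2 * δ))) * h) * t := by
      apply mul_nonneg (mul_nonneg (le_of_lt hs0) _) (le_of_lt ht0)
      apply mul_nonneg (mul_nonneg (le_of_lt hC0) _) (le_of_lt hhpos)
      apply div_nonneg (Real.rpow_nonneg (le_of_lt hs0) _)
      positivity
    linarith
  · push_neg at hcase
    -- from s^γ * t^(-M) < K deduce a < κ * t
    have htM : (0 : ℝ) < t ^ M := Real.rpow_pos_of_pos ht0 _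
    have h1 : s ^ γ < K * t ^ M := by
      have hne : t ^ (-M) = (t ^ M)⁻¹ := Real.rpow_neg (le_of_lt ht0) M
      rw [hne] at hcase
      exact (div_lt_iff₀ htM).mp (by rw [div_eq_mul_inv]; exact hcase)
    have h2 : a < κ * t := by
      calc a = (s ^ γ) ^ (1 / M) := by
              rw [hadef, ← Real.rpow_mul (le_of_lt hs0)]
              congr 1
              rw [mul_one_div]
           _ < (K * t ^ M) ^ (1 / M) := Real.rpow_lt_rpow
                (Real.rpow_nonneg (le_of_lt hs0) γ) h1 (by positivity)
           _ = κ * t := by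
              rw [Real.mul_rpow (le_of_lt hK) (le_of_lt htM),
                ← Real.rpow_mul (le_of_lt ht0), mul_one_div, div_self (ne_of_gt hM),
                Real.rpow_one, hκdef]
    -- rewrite the main term
    rw [hsd, hs2d]
    have hrw : s * (C * (a / s / (1 + a ^ 2) ) * h) * t
        = C * (a / (1 + a ^ 2)) * h * t := by
      field_simp
    rw [hrw]
    set b : ℝ := a / (1 + a ^ 2) with hbdef
    have hb0 : 0 < b := by positivity
    have hbeq : (1 + a ^ 2) * b = a := by
      rw [hbdef]; field_simp
    have h2ab : 1 ≤ 2 * a * b := by nlinarith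
    have hX : C * b * h * t ≥ K := by
      have q1 : 0 ≤ (a * κ * (C * b * t)) * (h - 1/2) :=
        mul_nonneg (by positivity) (by linarith)
      have q2 : 0 ≤ (C * κ * t) * (2 * a * b - 1) :=
        mul_nonneg (by positivity) (by linarith)
      have q3 : C * a ≤ C * (κ * t) := le_of_lt (mul_lt_mul_of_pos_left h2 hC0)
      have q4 : 4 * K * κ * a ≤ C * a := mul_le_mul_of_nonneg_right hC (le_of_lt ha0)
      have key : 4 * a * κ * K ≤ 4 * a * κ * (C * b * h * t) := by
        clear_value κ a b h
        nlinarith [q1, q2, q3, q4]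
      exact le_of_mul_le_mul_left key (by positivity)
    linarith
end

section
/- Let Ψ̄ : ℝ⁴ → ℝ be continuous, positively one-homogeneous, smooth and positive on ℝ⁴∖{0}, and uniformly elliptic, i.e., for every unit vector ω ∈ ℝ⁴ the restriction of D²Ψ̄(ω) to the orthogonal complement ω^⊥ is positive definite. Let F : ℝ → ℝ be smooth, even, and convex with F(s) = s + 1/(8s) for all s > 1/2. Let Ψ : ℝ⁴ → ℝ be smooth and positive with everywhere positive definite Hessian, such that Ψ = F∘Ψ̄ on the set {Ψ̄ > 1}. Define Φ : ℝ⁵ → ℝ by Φ(x, y, z) = |z|·Ψ((x,y)/|z|) for z ≠ 0 and Φ(x, y, 0) = Ψ̄(x, y), where (x,y) ∈ ℝ⁴ and z ∈ ℝ. Then Φ is positively one-homogeneous, positive and smooth on ℝ⁵∖{0}, and uniformly elliptic: for every unit vector ν ∈ ℝ⁵ the restriction of D²Φ(ν) to ν^⊥ is positive definite. -/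
open scoped Topology RealInnerProductSpace

/-- The `ℝ⁴`-part `(x, y)` of a point `(x, y, z) ∈ ℝ⁵`. -/
noncomputable def horiz (v : EuclideanSpace ℝ (Fin 5)) : EuclideanSpace ℝ (Fin 4) :=
  (EuclideanSpace.equiv (Fin 4) ℝ).symm fun i => v (Fin.castSucc i)

noncomputable def horizCLM : EuclideanSpace ℝ (Fin 5) →L[ℝ] EuclideanSpace ℝ (Fin 4) :=
  ((EuclideanSpace.equiv (Fin 4) ℝ).symm.toContinuousLinearMap).comp
    (ContinuousLinearMap.pi fun i => EuclideanSpace.proj (Fin.castSucc i))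
lemma horizCLM_apply (v : EuclideanSpace ℝ (Fin 5)) : horizCLM v = horiz v := rfl
lemma horiz_add (a b : EuclideanSpace ℝ (Fin 5)) : horiz (a + b) = horiz a + horiz b := by
  rw [← horizCLM_apply, ← horizCLM_apply, ← horizCLM_apply, map_add]
lemma horiz_smul (t : ℝ) (a : EuclideanSpace ℝ (Fin 5)) : horiz (t • a) = t • horiz a := by
  rw [← horizCLM_apply, ← horizCLM_apply, map_smul]
lemma fin5_four : (4 : Fin 5) = Fin.last 4 := rfl
lemma eq_zero_of (v : EuclideanSpace ℝ (Fin 5)) (h1 : horiz v = 0) (h2 : v 4 = 0) : v = 0 := by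
  ext j
  induction j using Fin.lastCases with
  | last => simpa using h2
  | cast i => simpa [horiz] using congrArg (fun w => w i) h1
lemma norm_sq_split (v : EuclideanSpace ℝ (Fin 5)) :
    ‖v‖ ^ 2 = ‖horiz v‖ ^ 2 + (v 4) ^ 2 := by
  rw [← real_inner_self_eq_norm_sq, ← real_inner_self_eq_norm_sq]
  simp only [PiLp.inner_apply, RCLike.inner_apply, conj_trivial]
  rw [Fin.sum_univ_castSucc]
  simp [horiz, pow_two, fin5_four]
lemma inner_split (v w : EuclideanSpace ℝ (Fin 5)) :
    ⟪v, w⟫ = ⟪horiz v, horiz w⟫ + v 4 * w 4 := by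
  simp only [PiLp.inner_apply, RCLike.inner_apply, conj_trivial]
  rw [Fin.sum_univ_castSucc]
  simp [horiz, fin5_four]
  ring
lemma line_apply4 (x y : EuclideanSpace ℝ (Fin 5)) (t : ℝ) :
    (x + t • y) 4 = x 4 + t * y 4 := by
  simp [PiLp.add_apply, PiLp.smul_apply, smul_eq_mul]
section aux
variable {E : Type*} [NormedAddCommGroup E] [NormedSpace ℝ E]
lemma aux_hasDerivAt_line (x v : E) (t : ℝ) : HasDerivAt (fun t : ℝ => x + t • v) v t := by
  simpa using ((hasDerivAt_id t).smul_const v).const_add x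
lemma aux_fderiv_line {f : E → ℝ} {γ : ℝ → E} {γ' : E} {t : ℝ}
    (hf : ContDiffAt ℝ 2 f (γ t)) (hγ : HasDerivAt γ γ' t) :
    HasDerivAt (fun s => fderiv ℝ f (γ s)) ((fderiv ℝ (fderiv ℝ f) (γ t)) γ') t := by
  have h1 : DifferentiableAt ℝ (fderiv ℝ f) (γ t) :=
    (hf.fderiv_right (m := 1) (le_refl 2)).differentiableAt one_ne_zero
  exact h1.hasFDerivAt.comp_hasDerivAt t hγ
lemma aux_second_deriv_line {f : E → ℝ} {x : E} (v : E) (hf : ContDiffAt ℝ 2 f x) :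
    iteratedFDeriv ℝ 2 f x ![v, v] = deriv (deriv (fun t : ℝ => f (x + t • v))) 0 := by
  obtain ⟨u, hu, hfu⟩ := hf.contDiffOn (le_refl 2) (by simp)
  have hxU : x ∈ interior u := mem_interior_iff_mem_nhds.2 hu
  have hUo : IsOpen (interior u) := isOpen_interior
  have hfU : ContDiffOn ℝ 2 f (interior u) := hfu.mono interior_subset
  have hcont : Continuous (fun t : ℝ => x + t • v) := by fun_prop
  have hmem : ∀ᶠ t in 𝓝 (0 : ℝ), x + t • v ∈ interior u :=
    hcont.continuousAt (x := (0:ℝ)) |>.preimage_mem_nhds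
      (hUo.mem_nhds (by simpa using hxU))
  have hder : deriv (fun t : ℝ => f (x + t • v)) =ᶠ[𝓝 (0:ℝ)]
      fun t => (fderiv ℝ f (x + t • v)) v := by
    filter_upwards [hmem] with t ht
    have hdf : DifferentiableAt ℝ f (x + t • v) :=
      (hfU.contDiffAt (hUo.mem_nhds ht)).differentiableAt two_ne_zero
    have := (hdf.hasFDerivAt.comp_hasDerivAt t (aux_hasDerivAt_line x v t)).deriv
    simpa [Function.comp_def] using this
  have h2 : HasDerivAt (fun t : ℝ => (fderiv ℝ f (x + t • v)) v)
      ((fderiv ℝ (fderiv ℝ f) x) v v) 0 := by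
    have hγ := aux_hasDerivAt_line x v 0
    have hf' : ContDiffAt ℝ 2 f ((fun t : ℝ => x + t • v) 0) := by simpa using hf
    have h := (aux_fderiv_line hf' hγ).clm_apply (hasDerivAt_const 0 v)
    simpa using h
  rw [iteratedFDeriv_two_apply, hder.deriv_eq, h2.deriv]
  simp
end aux

lemma caseA (Ψb : EuclideanSpace ℝ (Fin 4) → ℝ)
    (hΨb_cont : Continuous Ψb)
    (hΨb_smooth : ContDiffOn ℝ (⊤ : ℕ∞) Ψb {p : EuclideanSpace ℝ (Fin 4) | p ≠ 0})
    (hΨb_pos : ∀ p : EuclideanSpace ℝ (Fin 4), p ≠ 0 → 0 < Ψb p)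
    (hΨb_ell : ∀ ω : EuclideanSpace ℝ (Fin 4), ‖ω‖ = 1 →
      ∀ v : EuclideanSpace ℝ (Fin 4), v ≠ 0 → ⟪v, ω⟫ = 0 →
        0 < iteratedFDeriv ℝ 2 Ψb ω ![v, v])
    (Φ : EuclideanSpace ℝ (Fin 5) → ℝ)
    (hW : ∀ v : EuclideanSpace ℝ (Fin 5), |v 4| < Ψb (horiz v) →
      Φ v = Ψb (horiz v) + (v 4) ^ 2 / (8 * Ψb (horiz v)))
    (ν : EuclideanSpace ℝ (Fin 5)) (hν : ‖ν‖ = 1) (hζ : ν 4 = 0)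
    (v : EuclideanSpace ℝ (Fin 5)) (hv : v ≠ 0) (hvν : ⟪v, ν⟫ = 0)
    (hC2 : ContDiffAt ℝ 2 Φ ν) :
    0 < iteratedFDeriv ℝ 2 Φ ν ![v, v] := by
  have hω : horiz ν ≠ 0 := by
    intro h
    rw [eq_zero_of ν h hζ] at hν
    simp at hν
  have hψ0pos : 0 < Ψb (horiz ν) := hΨb_pos _ hω
  have hnω : ‖horiz ν‖ = 1 := by
    have h := norm_sq_split ν
    rw [hν, hζ] at h
    nlinarith [norm_nonneg (horiz ν)]
  have hwω : ⟪horiz v, horiz ν⟫ = 0 := by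
    have h := inner_split v ν
    rw [hvν, hζ] at h
    linarith
  rw [aux_second_deriv_line v hC2]
  -- the horizontal and vertical components along the line
  have hlineh : ∀ t : ℝ, horiz (ν + t • v) = horiz ν + t • horiz v := by
    intro t; rw [horiz_add, horiz_smul]
  have hcontl : Continuous (fun t : ℝ => horiz ν + t • horiz v) := by fun_prop
  -- eventually the line is in the nonzero region
  have hne : ∀ᶠ t in 𝓝 (0:ℝ), horiz ν + t • horiz v ≠ 0 :=
    hcontl.continuousAt.preimage_mem_nhds (isOpen_ne.mem_nhds (by simpa using hω))
  have hΨbC : ∀ᶠ t in 𝓝 (0:ℝ), ContDiffAt ℝ 2 Ψb (horiz ν + t • horiz v) := by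
    filter_upwards [hne] with t ht
    exact (hΨb_smooth.contDiffAt (isOpen_ne.mem_nhds ht)).of_le (WithTop.coe_le_coe.mpr le_top)
  have hψd : ∀ᶠ t in 𝓝 (0:ℝ), HasDerivAt (fun t : ℝ => Ψb (horiz ν + t • horiz v))
      ((fderiv ℝ Ψb (horiz ν + t • horiz v)) (horiz v)) t := by
    filter_upwards [hΨbC] with t ht
    exact ((ht.differentiableAt two_ne_zero).hasFDerivAt).comp_hasDerivAt t
      (aux_hasDerivAt_line _ _ t)
  have hψpos : ∀ᶠ t in 𝓝 (0:ℝ), 0 < Ψb (horiz ν + t • horiz v) := by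
    have hc2 : Continuous fun t : ℝ => Ψb (horiz ν + t • horiz v) := hΨb_cont.comp hcontl
    have : (fun t : ℝ => Ψb (horiz ν + t • horiz v)) 0 ∈ Set.Ioi (0:ℝ) := by
      simpa using hψ0pos
    exact hc2.continuousAt.preimage_mem_nhds (isOpen_Ioi.mem_nhds this)
  -- model along the line
  have hmodel : (fun t : ℝ => Φ (ν + t • v)) =ᶠ[𝓝 (0:ℝ)]
      fun t => Ψb (horiz ν + t • horiz v) +
        (v 4) ^ 2 * t ^ 2 / (8 * Ψb (horiz ν + t • horiz v)) := by
    have hcont3 : Continuous fun t : ℝ =>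
        Ψb (horiz ν + t • horiz v) - |ν 4 + t * v 4| := by fun_prop
    have h0 : (fun t : ℝ => Ψb (horiz ν + t • horiz v) - |ν 4 + t * v 4|) 0
        ∈ Set.Ioi (0:ℝ) := by
      simp only [Set.mem_Ioi, zero_smul, add_zero, mul_zero, hζ, abs_zero, sub_zero]
      simpa using hψ0pos
    have hev := hcont3.continuousAt.preimage_mem_nhds (isOpen_Ioi.mem_nhds h0)
    filter_upwards [hev] with t ht
    have hlt : |(ν + t • v) 4| < Ψb (horiz (ν + t • v)) := by
      rw [line_apply4, hlineh]
      simpa [sub_pos] using ht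
    rw [hW _ hlt, hlineh, line_apply4, hζ, zero_add]
    ring
  rw [hmodel.deriv.deriv_eq]
  -- first derivative of the model
  have hm' : deriv (fun t : ℝ => Ψb (horiz ν + t • horiz v) +
        (v 4) ^ 2 * t ^ 2 / (8 * Ψb (horiz ν + t • horiz v))) =ᶠ[𝓝 (0:ℝ)]
      fun t => (fderiv ℝ Ψb (horiz ν + t • horiz v)) (horiz v) +
        ((v 4) ^ 2 * (2 * t ^ 1) * (8 * Ψb (horiz ν + t • horiz v)) -
          (v 4) ^ 2 * t ^ 2 * (8 * ((fderiv ℝ Ψb (horiz ν + t • horiz v)) (horiz v)))) /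
          (8 * Ψb (horiz ν + t • horiz v)) ^ 2 := by
    filter_upwards [hψd, hψpos] with t hd hp
    have h1 : HasDerivAt (fun t : ℝ => (v 4) ^ 2 * t ^ 2) ((v 4) ^ 2 * (2 * t ^ 1)) t := by
      simpa using (hasDerivAt_pow 2 t).const_mul ((v 4) ^ 2)
    have h2 : HasDerivAt (fun t : ℝ => 8 * Ψb (horiz ν + t • horiz v))
        (8 * ((fderiv ℝ Ψb (horiz ν + t • horiz v)) (horiz v))) t := hd.const_mul 8
    exact (hd.add (h1.div h2 (by positivity))).deriv
  rw [hm'.deriv_eq]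
  -- second derivative: differentiate the first-derivative formula at 0
  have hC2b : ContDiffAt ℝ 2 Ψb (horiz ν) :=
    (hΨb_smooth.contDiffAt (isOpen_ne.mem_nhds hω)).of_le (WithTop.coe_le_coe.mpr le_top)
  have hg0 : HasDerivAt (fun t : ℝ => (fderiv ℝ Ψb (horiz ν + t • horiz v)) (horiz v))
      ((fderiv ℝ (fderiv ℝ Ψb) (horiz ν)) (horiz v) (horiz v)) 0 := by
    have hf' : ContDiffAt ℝ 2 Ψb ((fun t : ℝ => horiz ν + t • horiz v) 0) := by simpa using hC2b
    have h := (aux_fderiv_line hf' (aux_hasDerivAt_line (horiz ν) (horiz v) 0)).clm_apply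
      (hasDerivAt_const 0 (horiz v))
    simpa using h
  have hψd0 : HasDerivAt (fun t : ℝ => Ψb (horiz ν + t • horiz v))
      ((fderiv ℝ Ψb (horiz ν + (0:ℝ) • horiz v)) (horiz v)) 0 := hψd.self_of_nhds
  have ha := ((hasDerivAt_pow 1 (0:ℝ)).const_mul (2:ℝ)).const_mul ((v 4) ^ 2)
  have hb := hψd0.const_mul (8:ℝ)
  have hcp := (hasDerivAt_pow 2 (0:ℝ)).const_mul ((v 4) ^ 2)
  have hdg := hg0.const_mul (8:ℝ)
  have hnum := (ha.mul hb).sub (hcp.mul hdg)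
  have hden := hb.pow 2
  have hQ := hg0.add (hnum.div hden (by
    have : (0:ℝ) < Ψb (horiz ν + (0:ℝ) • horiz v) := by simpa using hψ0pos
    simp only [Pi.pow_apply]; positivity))
  refine lt_of_lt_of_eq ?_ hQ.deriv.symm
  have hz : horiz ν + (0:ℝ) • horiz v = horiz ν := by simp
  rw [hz]
  norm_num
  rcases eq_or_ne (horiz v) 0 with hw0 | hw0
  · have hs : v 4 ≠ 0 := fun h => hv (eq_zero_of v hw0 h)
    simp only [hw0, map_zero, ContinuousLinearMap.zero_apply, zero_add]
    positivity
  · have hQpos := hΨb_ell (horiz ν) hnω (horiz v) hw0 hwω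
    rw [iteratedFDeriv_two_apply] at hQpos
    simp only [Matrix.cons_val_zero, Matrix.cons_val_one, Matrix.head_cons] at hQpos
    have h2 : (0:ℝ) ≤ v 4 ^ 2 * 2 * (8 * Ψb (horiz ν)) * (8 * Ψb (horiz ν)) ^ 2 /
        ((8 * Ψb (horiz ν)) ^ 2) ^ 2 := by positivity
    linarith

lemma horiz_cont : Continuous horiz := horizCLM.continuous
lemma horiz_contDiff : ContDiff ℝ (⊤ : ℕ∞) horiz := horizCLM.contDiff
lemma proj4_contDiff : ContDiff ℝ (⊤ : ℕ∞) (fun v : EuclideanSpace ℝ (Fin 5) => v 4) :=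
  (EuclideanSpace.proj (𝕜 := ℝ) (4 : Fin 5)).contDiff

lemma modelW (Ψb : EuclideanSpace ℝ (Fin 4) → ℝ)
    (hΨb_homog : ∀ t > (0 : ℝ), ∀ p, Ψb (t • p) = t * Ψb p)
    (F : ℝ → ℝ)
    (hF_eq : ∀ s > (1 / 2 : ℝ), F s = s + 1 / (8 * s))
    (Ψ : EuclideanSpace ℝ (Fin 4) → ℝ)
    (hΨ_eq : ∀ p : EuclideanSpace ℝ (Fin 4), 1 < Ψb p → Ψ p = F (Ψb p))
    (Φ : EuclideanSpace ℝ (Fin 5) → ℝ)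
    (hΦ_ne : ∀ v : EuclideanSpace ℝ (Fin 5), v 4 ≠ 0 →
      Φ v = |v 4| * Ψ (|v 4|⁻¹ • horiz v))
    (hΦ_eq : ∀ v : EuclideanSpace ℝ (Fin 5), v 4 = 0 → Φ v = Ψb (horiz v))
    (v : EuclideanSpace ℝ (Fin 5)) (hv : |v 4| < Ψb (horiz v)) :
    Φ v = Ψb (horiz v) + (v 4) ^ 2 / (8 * Ψb (horiz v)) := by
  rcases eq_or_ne (v 4) 0 with h0 | h0
  · rw [hΦ_eq v h0, h0]; norm_num
  · have habs : 0 < |v 4| := abs_pos.mpr h0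
    have hpos : 0 < Ψb (horiz v) := lt_of_le_of_lt (abs_nonneg _) hv
    have hhom : Ψb (|v 4|⁻¹ • horiz v) = |v 4|⁻¹ * Ψb (horiz v) :=
      hΨb_homog _ (inv_pos.mpr habs) _
    have h1 : 1 < Ψb (|v 4|⁻¹ • horiz v) := by
      rw [hhom, inv_mul_eq_div]
      exact (one_lt_div habs).mpr hv
    rw [hΦ_ne v h0, hΨ_eq _ h1, hF_eq _ (by linarith), hhom]
    have h2 : (0:ℝ) < 8 * (|v 4|⁻¹ * Ψb (horiz v)) := by positivity
    rw [mul_add]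
    have e1 : |v 4| * (|v 4|⁻¹ * Ψb (horiz v)) = Ψb (horiz v) := by
      field_simp
    have e2 : |v 4| * (1 / (8 * (|v 4|⁻¹ * Ψb (horiz v)))) = (v 4) ^ 2 / (8 * Ψb (horiz v)) := by
      rw [← sq_abs]
      field_simp
    rw [e1, e2]

lemma smoothΦ (Ψb : EuclideanSpace ℝ (Fin 4) → ℝ)
    (hΨb_cont : Continuous Ψb)
    (hΨb_smooth : ContDiffOn ℝ (⊤ : ℕ∞) Ψb {p : EuclideanSpace ℝ (Fin 4) | p ≠ 0})
    (hΨb_pos : ∀ p : EuclideanSpace ℝ (Fin 4), p ≠ 0 → 0 < Ψb p)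
    (Ψ : EuclideanSpace ℝ (Fin 4) → ℝ)
    (hΨ_smooth : ContDiff ℝ (⊤ : ℕ∞) Ψ)
    (Φ : EuclideanSpace ℝ (Fin 5) → ℝ)
    (hΦ_ne : ∀ v : EuclideanSpace ℝ (Fin 5), v 4 ≠ 0 →
      Φ v = |v 4| * Ψ (|v 4|⁻¹ • horiz v))
    (hW : ∀ v : EuclideanSpace ℝ (Fin 5), |v 4| < Ψb (horiz v) →
      Φ v = Ψb (horiz v) + (v 4) ^ 2 / (8 * Ψb (horiz v)))
    (x : EuclideanSpace ℝ (Fin 5)) (hx : x ≠ 0) :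
    ContDiffAt ℝ (⊤ : ℕ∞) Φ x := by
  rcases lt_trichotomy (x 4) 0 with hx4 | hx4 | hx4
  · -- x 4 < 0, model: (-v 4) * Ψ ((-v 4)⁻¹ • horiz v)
    have hG : ContDiffAt ℝ (⊤ : ℕ∞) (fun v : EuclideanSpace ℝ (Fin 5) =>
        (-v 4) * Ψ ((-v 4)⁻¹ • horiz v)) x := by
      have hp : ContDiffAt ℝ (⊤ : ℕ∞) (fun v : EuclideanSpace ℝ (Fin 5) => -v 4) x :=
        proj4_contDiff.contDiffAt.neg
      exact hp.mul ((hΨ_smooth.contDiffAt).comp x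
        ((hp.inv (by simpa using hx4.ne)).smul horiz_contDiff.contDiffAt))
    refine hG.congr_of_eventuallyEq ?_
    have hopen : IsOpen {v : EuclideanSpace ℝ (Fin 5) | v 4 < 0} :=
      isOpen_lt proj4_contDiff.continuous continuous_const
    filter_upwards [hopen.mem_nhds hx4] with v hv
    rw [hΦ_ne v (ne_of_lt hv), abs_of_neg hv]
  · -- x 4 = 0
    have hhx : horiz x ≠ 0 := fun h => hx (eq_zero_of x h hx4)
    have hpos : 0 < Ψb (horiz x) := hΨb_pos _ hhx
    have hopen : IsOpen {v : EuclideanSpace ℝ (Fin 5) | |v 4| < Ψb (horiz v)} :=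
      isOpen_lt (continuous_abs.comp proj4_contDiff.continuous)
        (hΨb_cont.comp horiz_cont)
    have hxW : x ∈ {v : EuclideanSpace ℝ (Fin 5) | |v 4| < Ψb (horiz v)} := by
      simp only [Set.mem_setOf_eq, hx4, abs_zero]; exact hpos
    have hbh : ContDiffAt ℝ (⊤ : ℕ∞) (fun v : EuclideanSpace ℝ (Fin 5) => Ψb (horiz v)) x := by
      have h1 : ContDiffAt ℝ (⊤ : ℕ∞) Ψb (horiz x) :=
        hΨb_smooth.contDiffAt (isOpen_ne.mem_nhds hhx)
      exact h1.comp x horiz_contDiff.contDiffAt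
    have hH : ContDiffAt ℝ (⊤ : ℕ∞) (fun v : EuclideanSpace ℝ (Fin 5) =>
        Ψb (horiz v) + (v 4) ^ 2 / (8 * Ψb (horiz v))) x := by
      refine hbh.add (ContDiffAt.div ?_ (contDiffAt_const.mul hbh) (by positivity))
      exact proj4_contDiff.contDiffAt.pow 2
    refine hH.congr_of_eventuallyEq ?_
    filter_upwards [hopen.mem_nhds hxW] with v hv
    exact hW v hv
  · -- x 4 > 0
    have hG : ContDiffAt ℝ (⊤ : ℕ∞) (fun v : EuclideanSpace ℝ (Fin 5) =>
        v 4 * Ψ ((v 4)⁻¹ • horiz v)) x := by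
      have hp : ContDiffAt ℝ (⊤ : ℕ∞) (fun v : EuclideanSpace ℝ (Fin 5) => v 4) x :=
        proj4_contDiff.contDiffAt
      exact hp.mul ((hΨ_smooth.contDiffAt).comp x
        ((hp.inv (ne_of_gt hx4)).smul horiz_contDiff.contDiffAt))
    refine hG.congr_of_eventuallyEq ?_
    have hopen : IsOpen {v : EuclideanSpace ℝ (Fin 5) | 0 < v 4} :=
      isOpen_lt continuous_const proj4_contDiff.continuous
    filter_upwards [hopen.mem_nhds hx4] with v hv
    rw [hΦ_ne v (ne_of_gt hv), abs_of_pos hv]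

lemma horiz_sub (a b : EuclideanSpace ℝ (Fin 5)) : horiz (a - b) = horiz a - horiz b := by
  rw [← horizCLM_apply, ← horizCLM_apply, ← horizCLM_apply, map_sub]

set_option maxHeartbeats 2000000 in
lemma caseB (Ψ : EuclideanSpace ℝ (Fin 4) → ℝ)
    (hΨ_smooth : ContDiff ℝ (⊤ : ℕ∞) Ψ)
    (hΨ_hess : ∀ p, ∀ v : EuclideanSpace ℝ (Fin 4), v ≠ 0 →
      0 < iteratedFDeriv ℝ 2 Ψ p ![v, v])
    (Φ : EuclideanSpace ℝ (Fin 5) → ℝ)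
    (hΦ_ne : ∀ v : EuclideanSpace ℝ (Fin 5), v 4 ≠ 0 →
      Φ v = |v 4| * Ψ (|v 4|⁻¹ • horiz v))
    (ν : EuclideanSpace ℝ (Fin 5)) (hν : ‖ν‖ = 1) (hζ : ν 4 ≠ 0)
    (v : EuclideanSpace ℝ (Fin 5)) (hv : v ≠ 0) (hvν : ⟪v, ν⟫ = 0)
    (hC2 : ContDiffAt ℝ 2 Φ ν) :
    0 < iteratedFDeriv ℝ 2 Φ ν ![v, v] := by
  obtain ⟨ε, hε1, hεν⟩ : ∃ ε : ℝ, (ε = 1 ∨ ε = -1) ∧ 0 < ε * ν 4 := by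
    rcases hζ.lt_or_gt with h | h
    · exact ⟨-1, Or.inr rfl, by nlinarith⟩
    · exact ⟨1, Or.inl rfl, by nlinarith⟩
  have hεne : ε ≠ 0 := by rcases hε1 with h | h <;> rw [h] <;> norm_num
  have habs : ∀ x : ℝ, 0 < ε * x → |x| = ε * x := by
    intro x hx
    rcases hε1 with h | h <;> subst h
    · rw [one_mul] at hx ⊢; exact abs_of_pos hx
    · have hx0 : x < 0 := by nlinarith
      rw [abs_of_neg hx0]; ring
  have hc : ∀ t : ℝ, HasDerivAt (fun t : ℝ => ε * (ν 4 + t * v 4)) (ε * (1 * v 4)) t :=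
    fun t => (((hasDerivAt_id t).mul_const (v 4)).const_add (ν 4)).const_mul ε
  have hcpos : ∀ᶠ t in 𝓝 (0:ℝ), 0 < ε * (ν 4 + t * v 4) := by
    have hcont : Continuous fun t : ℝ => ε * (ν 4 + t * v 4) := by fun_prop
    have h0 : (fun t : ℝ => ε * (ν 4 + t * v 4)) 0 ∈ Set.Ioi (0:ℝ) := by
      simpa using hεν
    exact hcont.continuousAt.preimage_mem_nhds (isOpen_Ioi.mem_nhds h0)
  have hlineh : ∀ t : ℝ, horiz (ν + t • v) = horiz ν + t • horiz v := by
    intro t; rw [horiz_add, horiz_smul]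
  rw [aux_second_deriv_line v hC2]
  -- derivative of γ
  have hγd : ∀ᶠ t in 𝓝 (0:ℝ), HasDerivAt
      (fun t : ℝ => (ε * (ν 4 + t * v 4))⁻¹ • (horiz ν + t • horiz v))
      ((ε * (ν 4 + t * v 4))⁻¹ • horiz v +
        (-(ε * (1 * v 4)) / (ε * (ν 4 + t * v 4)) ^ 2) • (horiz ν + t • horiz v)) t := by
    filter_upwards [hcpos] with t hct
    exact ((hc t).inv (ne_of_gt hct)).smul (aux_hasDerivAt_line _ _ t)
  -- model along the line
  have hmodel : (fun t : ℝ => Φ (ν + t • v)) =ᶠ[𝓝 (0:ℝ)]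
      fun t => (ε * (ν 4 + t * v 4)) *
        Ψ ((ε * (ν 4 + t * v 4))⁻¹ • (horiz ν + t • horiz v)) := by
    filter_upwards [hcpos] with t hct
    have hne4 : (ν + t • v) 4 ≠ 0 := by
      rw [line_apply4]
      intro h; rw [h, mul_zero] at hct; exact lt_irrefl 0 hct
    rw [hΦ_ne _ hne4, line_apply4, hlineh, habs _ hct]
  rw [hmodel.deriv.deriv_eq]
  -- first derivative of the model
  have hΨdiff : Differentiable ℝ Ψ := hΨ_smooth.differentiable (by simp)
  have hΨd : ∀ᶠ t in 𝓝 (0:ℝ), HasDerivAt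
      (fun t : ℝ => Ψ ((ε * (ν 4 + t * v 4))⁻¹ • (horiz ν + t • horiz v)))
      ((fderiv ℝ Ψ ((ε * (ν 4 + t * v 4))⁻¹ • (horiz ν + t • horiz v)))
        ((ε * (ν 4 + t * v 4))⁻¹ • horiz v +
          (-(ε * (1 * v 4)) / (ε * (ν 4 + t * v 4)) ^ 2) • (horiz ν + t • horiz v))) t := by
    filter_upwards [hγd] with t ht
    exact ((hΨdiff _).hasFDerivAt).comp_hasDerivAt t ht
  have hm' : (deriv fun t : ℝ => (ε * (ν 4 + t * v 4)) *
        Ψ ((ε * (ν 4 + t * v 4))⁻¹ • (horiz ν + t • horiz v))) =ᶠ[𝓝 (0:ℝ)]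
      fun t => ε * (1 * v 4) * Ψ ((ε * (ν 4 + t * v 4))⁻¹ • (horiz ν + t • horiz v)) +
        (ε * (ν 4 + t * v 4)) *
          ((fderiv ℝ Ψ ((ε * (ν 4 + t * v 4))⁻¹ • (horiz ν + t • horiz v)))
            ((ε * (ν 4 + t * v 4))⁻¹ • horiz v +
              (-(ε * (1 * v 4)) / (ε * (ν 4 + t * v 4)) ^ 2) • (horiz ν + t • horiz v))) := by
    filter_upwards [hΨd] with t ht
    exact ((hc t).mul ht).deriv
  rw [hm'.deriv_eq]
  -- now differentiate the formula at 0
  have hc0pos : 0 < ε * (ν 4 + 0 * v 4) := by simpa using hεν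
  have hγ0 : HasDerivAt (fun t : ℝ => (ε * (ν 4 + t * v 4))⁻¹ • (horiz ν + t • horiz v))
      ((ε * (ν 4 + 0 * v 4))⁻¹ • horiz v +
        (-(ε * (1 * v 4)) / (ε * (ν 4 + 0 * v 4)) ^ 2) • (horiz ν + (0:ℝ) • horiz v)) 0 :=
    hγd.self_of_nhds
  have hΨd0 : HasDerivAt
      (fun t : ℝ => Ψ ((ε * (ν 4 + t * v 4))⁻¹ • (horiz ν + t • horiz v)))
      ((fderiv ℝ Ψ ((ε * (ν 4 + 0 * v 4))⁻¹ • (horiz ν + (0:ℝ) • horiz v)))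
        ((ε * (ν 4 + 0 * v 4))⁻¹ • horiz v +
          (-(ε * (1 * v 4)) / (ε * (ν 4 + 0 * v 4)) ^ 2) • (horiz ν + (0:ℝ) • horiz v))) 0 :=
    hΨd.self_of_nhds
  have hT1 := hΨd0.const_mul (ε * (1 * v 4))
  -- derivative of the operator curve
  have hop : HasDerivAt
      (fun t : ℝ => fderiv ℝ Ψ ((ε * (ν 4 + t * v 4))⁻¹ • (horiz ν + t • horiz v)))
      ((fderiv ℝ (fderiv ℝ Ψ) ((ε * (ν 4 + 0 * v 4))⁻¹ • (horiz ν + (0:ℝ) • horiz v)))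
        ((ε * (ν 4 + 0 * v 4))⁻¹ • horiz v +
          (-(ε * (1 * v 4)) / (ε * (ν 4 + 0 * v 4)) ^ 2) • (horiz ν + (0:ℝ) • horiz v))) 0 :=
    aux_fderiv_line ((hΨ_smooth.of_le (WithTop.coe_le_coe.mpr le_top)).contDiffAt) hγ0
  -- derivative of Γ
  have hpart1 := (((hc 0).inv (ne_of_gt hc0pos)).smul_const (horiz v))
  have hpart2 := ((hasDerivAt_const (0:ℝ) (-(ε * (1 * v 4)))).div ((hc 0).pow 2)
      (by simp only [Pi.pow_apply]; positivity)).smul (aux_hasDerivAt_line (horiz ν) (horiz v) 0)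
  have hΓd := hpart1.add hpart2
  have hT2 := (hc 0).mul (hop.clm_apply hΓd)
  have hM := hT1.add hT2
  refine lt_of_lt_of_eq ?_ hM.deriv.symm
  simp only [zero_smul, add_zero, mul_zero, zero_mul, pow_one, one_mul]
  norm_num
  -- the direction vector is nonzero
  have hUne : ((ν 4)⁻¹ * ε⁻¹) • horiz v + (-(ε * v 4) / (ε * ν 4) ^ 2) • horiz ν ≠ 0 := by
    intro h
    have h5 := congrArg (fun u : EuclideanSpace ℝ (Fin 4) => (ε * ν 4) • u) h
    simp only [smul_add, smul_smul, smul_zero] at h5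
    have hco1 : ε * ν 4 * ((ν 4)⁻¹ * ε⁻¹) = 1 := by field_simp
    have hco2 : ε * ν 4 * (-(ε * v 4) / (ε * ν 4) ^ 2) = -(v 4 / ν 4) := by
      field_simp
    rw [hco1, hco2, one_smul] at h5
    have h6 : horiz v = (v 4 / ν 4) • horiz ν := by
      have h7 := eq_neg_of_add_eq_zero_left h5
      rw [h7, neg_smul, neg_neg]
    have h8 : v - (v 4 / ν 4) • ν = 0 := by
      apply eq_zero_of
      · rw [horiz_sub, horiz_smul, h6, sub_self]
      · have : ((v 4 / ν 4) • ν) 4 = (v 4 / ν 4) * ν 4 := rfl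
        simp only [PiLp.sub_apply, this]
        field_simp
        ring
    have h9 : v = (v 4 / ν 4) • ν := by
      have := sub_eq_zero.mp h8; exact this
    have h10 : v 4 / ν 4 = 0 := by
      have h11 := hvν
      rw [h9, real_inner_smul_left, real_inner_self_eq_norm_sq, hν] at h11
      simpa using h11
    have h12 : v 4 = 0 := by
      rcases div_eq_zero_iff.mp h10 with h | h
      · exact h
      · exact absurd h hζ
    apply hv
    apply eq_zero_of v _ h12
    rw [h6, h12, zero_div, zero_smul]
  have hQpos := hΨ_hess (((ν 4)⁻¹ * ε⁻¹) • horiz ν) _ hUne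
  rw [iteratedFDeriv_two_apply] at hQpos
  simp only [Matrix.cons_val_zero, Matrix.cons_val_one, Matrix.head_cons, map_add, map_smul,
    smul_eq_mul, ContinuousLinearMap.add_apply, ContinuousLinearMap.coe_smul', Pi.smul_apply] at hQpos
  refine lt_of_lt_of_eq (mul_pos hεν hQpos) ?_
  field_simp
  ring


/-- **The extended integrand `Φ` on `ℝ⁵` is a uniformly elliptic integrand**
(Proposition 3.1 of the paper): with `Φ(x,y,z) = |z|·Ψ((x,y)/|z|)` for `z ≠ 0` and
`Φ(x,y,0) = Ψ̄(x,y)`, where `Ψ = F∘Ψ̄` on `{Ψ̄ > 1}` and `F(s) = s + 1/(8s)` for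
`s > 1/2`, the function `Φ` is positively one-homogeneous, positive and smooth away
from `0`, and its Hessian at each unit vector `ν` is positive definite on `ν^⊥`. -/
theorem extended_integrand_elliptic
    (Ψb : EuclideanSpace ℝ (Fin 4) → ℝ)
    (hΨb_cont : Continuous Ψb)
    (hΨb_homog : ∀ t > (0 : ℝ), ∀ p, Ψb (t • p) = t * Ψb p)
    (hΨb_smooth : ContDiffOn ℝ (⊤ : ℕ∞) Ψb {p : EuclideanSpace ℝ (Fin 4) | p ≠ 0})
    (hΨb_pos : ∀ p : EuclideanSpace ℝ (Fin 4), p ≠ 0 → 0 < Ψb p)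
    (hΨb_ell : ∀ ω : EuclideanSpace ℝ (Fin 4), ‖ω‖ = 1 →
      ∀ v : EuclideanSpace ℝ (Fin 4), v ≠ 0 → ⟪v, ω⟫ = 0 →
        0 < iteratedFDeriv ℝ 2 Ψb ω ![v, v])
    (F : ℝ → ℝ) (hF_smooth : ContDiff ℝ (⊤ : ℕ∞) F)
    (hF_even : ∀ s, F (-s) = F s)
    (hF_convex : ConvexOn ℝ Set.univ F)
    (hF_eq : ∀ s > (1 / 2 : ℝ), F s = s + 1 / (8 * s))
    (Ψ : EuclideanSpace ℝ (Fin 4) → ℝ)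
    (hΨ_smooth : ContDiff ℝ (⊤ : ℕ∞) Ψ)
    (hΨ_pos : ∀ p, 0 < Ψ p)
    (hΨ_hess : ∀ p, ∀ v : EuclideanSpace ℝ (Fin 4), v ≠ 0 →
      0 < iteratedFDeriv ℝ 2 Ψ p ![v, v])
    (hΨ_eq : ∀ p : EuclideanSpace ℝ (Fin 4), 1 < Ψb p → Ψ p = F (Ψb p))
    (Φ : EuclideanSpace ℝ (Fin 5) → ℝ)
    (hΦ_ne : ∀ v : EuclideanSpace ℝ (Fin 5), v 4 ≠ 0 →
      Φ v = |v 4| * Ψ (|v 4|⁻¹ • horiz v))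
    (hΦ_eq : ∀ v : EuclideanSpace ℝ (Fin 5), v 4 = 0 → Φ v = Ψb (horiz v)) :
    (∀ t > (0 : ℝ), ∀ v, Φ (t • v) = t * Φ v) ∧
    (∀ v : EuclideanSpace ℝ (Fin 5), v ≠ 0 → 0 < Φ v) ∧
    ContDiffOn ℝ (⊤ : ℕ∞) Φ {v : EuclideanSpace ℝ (Fin 5) | v ≠ 0} ∧
    (∀ ν : EuclideanSpace ℝ (Fin 5), ‖ν‖ = 1 →
      ∀ v : EuclideanSpace ℝ (Fin 5), v ≠ 0 → ⟪v, ν⟫ = 0 →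
        0 < iteratedFDeriv ℝ 2 Φ ν ![v, v]) := by
  have hW : ∀ v : EuclideanSpace ℝ (Fin 5), |v 4| < Ψb (horiz v) →
      Φ v = Ψb (horiz v) + (v 4) ^ 2 / (8 * Ψb (horiz v)) :=
    fun v hv => modelW Ψb hΨb_homog F hF_eq Ψ hΨ_eq Φ hΦ_ne hΦ_eq v hv
  have hsm : ∀ x : EuclideanSpace ℝ (Fin 5), x ≠ 0 → ContDiffAt ℝ (⊤ : ℕ∞) Φ x :=
    fun x hx => smoothΦ Ψb hΨb_cont hΨb_smooth hΨb_pos Ψ hΨ_smooth Φ hΦ_ne hW x hx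
  refine ⟨?_, ?_, ?_, ?_⟩
  · intro t ht v
    have h4 : (t • v) 4 = t * v 4 := rfl
    rcases eq_or_ne (v 4) 0 with h0 | h0
    · rw [hΦ_eq (t • v) (by rw [h4, h0, mul_zero]), hΦ_eq v h0, horiz_smul,
        hΨb_homog t ht]
    · have h4' : (t • v) 4 ≠ 0 := by rw [h4]; exact mul_ne_zero (ne_of_gt ht) h0
      rw [hΦ_ne _ h4', hΦ_ne v h0, h4, horiz_smul, abs_mul, abs_of_pos ht]
      have hv4 : (t * |v 4|)⁻¹ • t • horiz v = |v 4|⁻¹ • horiz v := by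
        rw [smul_smul]
        congr 1
        field_simp
      rw [hv4, mul_assoc]
  · intro v hv
    rcases eq_or_ne (v 4) 0 with h0 | h0
    · rw [hΦ_eq v h0]
      exact hΨb_pos _ (fun h => hv (eq_zero_of v h h0))
    · rw [hΦ_ne v h0]
      exact mul_pos (abs_pos.mpr h0) (hΨ_pos _)
  · exact fun x hx => (hsm x hx).contDiffWithinAt
  · intro ν hν v hv hvν
    have hν0 : ν ≠ 0 := by intro h; rw [h] at hν; simp at hν
    have hC2 : ContDiffAt ℝ 2 Φ ν := (hsm ν hν0).of_le (WithTop.coe_le_coe.mpr le_top)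
    rcases eq_or_ne (ν 4) 0 with h | h
    · exact caseA Ψb hΨb_cont hΨb_smooth hΨb_pos hΨb_ell Φ hW ν hν h v hv hvν hC2
    · exact caseB Ψ hΨ_smooth hΨ_hess Φ hΦ_ne ν hν h v hv hvν hC2
end
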